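/- Let n ≥ 1, let m(x,y) = x^p y^q ∈ 𝒪_n be an ordered monomial, and let σ ∈ B_n be its signed index permutation. Then the sequence (q_{|σ(i)|} − f_i(σ))_{i=1}^{n} is a weakly decreasing sequence of non-negative even integers. -/

import Mathlib

open MvPolynomial

/-- The hyperoctahedral group `Bₙ`, realized as the subgroup of permutations of `ℤ`
that commute with negation and fix every integer of absolute value greater than `n`.
Such a permutation restricts to a bijection `σ` of `{-n,…,-1,1,…,n}` with
`σ(-k) = -σ(k)`, and every such bijection arises from a unique element. -/
def HOct (n : ℕ) : Subgroup (Equiv.Perm ℤ) where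
  carrier := {σ | (∀ k : ℤ, σ (-k) = -(σ k)) ∧ ∀ k : ℤ, (n : ℤ) < |k| → σ k = k}
  one_mem' := by
    refine ⟨fun k => rfl, fun k _ => rfl⟩
  mul_mem' := by
    rintro σ τ ⟨hσ1, hσ2⟩ ⟨hτ1, hτ2⟩
    refine ⟨fun k => ?_, fun k hk => ?_⟩
    · simp [Equiv.Perm.mul_apply, hτ1, hσ1]
    · simp [Equiv.Perm.mul_apply, hτ2 k hk, hσ2 k hk]
  inv_mem' := by
    rintro σ ⟨h1, h2⟩
    refine ⟨fun k => ?_, fun k hk => ?_⟩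
    · apply σ.injective
      rw [h1]
      simp
    · have h := h2 k hk
      nth_rewrite 1 [← h]
      simp

/-- The descent set `Des(σ) = {1 ≤ i ≤ n-1 : σ(i) > σ(i+1)}`. -/
def DesB (n : ℕ) (σ : Equiv.Perm ℤ) : Finset ℕ :=
  (Finset.Ico 1 n).filter fun i => σ ((i : ℤ) + 1) < σ (i : ℤ)

/-- `d_i(σ) = #{j ∈ Des(σ) : j ≥ i}`. -/
def dB (n : ℕ) (σ : Equiv.Perm ℤ) (i : ℕ) : ℕ :=
  ((DesB n σ).filter fun j => i ≤ j).card

/-- `ε_i(σ)`: `1` if `σ(i) < 0`, `0` otherwise. -/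
def epsB (σ : Equiv.Perm ℤ) (i : ℕ) : ℕ := if σ (i : ℤ) < 0 then 1 else 0

/-- `f_i(σ) = 2 d_i(σ) + ε_i(σ)`. -/
def fB (n : ℕ) (σ : Equiv.Perm ℤ) (i : ℕ) : ℕ := 2 * dB n σ i + epsB σ i

/-- The sign `σ(k)/|σ(k)|` as a rational number. -/
def sgnQ (σ : Equiv.Perm ℤ) (k : ℤ) : ℚ := if σ k < 0 then -1 else 1

/-- For `i : Fin n` (representing the index `i+1 ∈ {1,…,n}`), the element of `Fin n`
representing `|σ(i+1)| ∈ {1,…,n}`. -/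
def sIdx {n : ℕ} (σ : Equiv.Perm ℤ) (i : Fin n) : Fin n :=
  ⟨((σ ((i : ℕ) + 1 : ℤ)).natAbs - 1) % n, Nat.mod_lt _ i.pos⟩

/-- The diagonal action of a signed permutation on `ℚ[x₁,…,xₙ,y₁,…,yₙ]`:
`x_k ↦ (σ(k)/|σ(k)|)·x_{|σ(k)|}` and `y_k ↦ (σ(k)/|σ(k)|)·y_{|σ(k)|}`.
Here `Sum.inl i` is the variable `x_{i+1}` and `Sum.inr i` is `y_{i+1}`. -/
noncomputable def actXY (n : ℕ) (σ : Equiv.Perm ℤ) :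
    MvPolynomial (Fin n ⊕ Fin n) ℚ →ₐ[ℚ] MvPolynomial (Fin n ⊕ Fin n) ℚ :=
  aeval (Sum.elim
    (fun i => C (sgnQ σ ((i : ℕ) + 1 : ℤ)) * X (Sum.inl (sIdx σ i)))
    (fun i => C (sgnQ σ ((i : ℕ) + 1 : ℤ)) * X (Sum.inr (sIdx σ i))))

/-- Action of a signed permutation on the `x`-variables only. -/
noncomputable def actX (n : ℕ) (σ : Equiv.Perm ℤ) :
    MvPolynomial (Fin n ⊕ Fin n) ℚ →ₐ[ℚ] MvPolynomial (Fin n ⊕ Fin n) ℚ :=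
  aeval (Sum.elim
    (fun i => C (sgnQ σ ((i : ℕ) + 1 : ℤ)) * X (Sum.inl (sIdx σ i)))
    (fun i => X (Sum.inr i)))

/-- Action of a signed permutation on the `y`-variables only. -/
noncomputable def actY (n : ℕ) (σ : Equiv.Perm ℤ) :
    MvPolynomial (Fin n ⊕ Fin n) ℚ →ₐ[ℚ] MvPolynomial (Fin n ⊕ Fin n) ℚ :=
  aeval (Sum.elim
    (fun i => X (Sum.inl i))
    (fun i => C (sgnQ σ ((i : ℕ) + 1 : ℤ)) * X (Sum.inr (sIdx σ i))))

/-- The averaging operator `ρ(f) = (1/|Bₙ|) ∑_{σ ∈ Bₙ} σ·f`. -/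
noncomputable def rho (n : ℕ) (f : MvPolynomial (Fin n ⊕ Fin n) ℚ) :
    MvPolynomial (Fin n ⊕ Fin n) ℚ :=
  (Nat.card ↥(HOct n) : ℚ)⁻¹ • ∑ᶠ σ : ↥(HOct n), actXY n (σ : Equiv.Perm ℤ) f

/-- The diagonal signed descent monomial
`c_σ = ∏_{i=1}^n x_i^{f_i(σ⁻¹)} y_i^{f_{|σ⁻¹(i)|}(σ)}`. -/
noncomputable def cMon (n : ℕ) (σ : Equiv.Perm ℤ) : MvPolynomial (Fin n ⊕ Fin n) ℚ :=
  ∏ i : Fin n,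
    (X (Sum.inl i) ^ fB n σ⁻¹ ((i : ℕ) + 1) *
      X (Sum.inr i) ^ fB n σ ((σ⁻¹ ((i : ℕ) + 1 : ℤ)).natAbs))

/-- The monomial `x^p y^q`. -/
noncomputable def monXY (n : ℕ) (p q : Fin n → ℕ) : MvPolynomial (Fin n ⊕ Fin n) ℚ :=
  (∏ i : Fin n, X (Sum.inl i) ^ p i) * ∏ i : Fin n, X (Sum.inr i) ^ q i

/-- The monomial `x^p y^q` is ordered (belongs to `𝒪ₙ`). -/
def OrderedMon (n : ℕ) (p q : Fin n → ℕ) : Prop :=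
  (∀ k, Even (p k + q k)) ∧ Antitone p ∧
  (∀ (i : Fin n) (h : (i : ℕ) + 1 < n),
    p i = p ⟨(i : ℕ) + 1, h⟩ → Even (p i) → q ⟨(i : ℕ) + 1, h⟩ ≤ q i) ∧
  (∀ (i : Fin n) (h : (i : ℕ) + 1 < n),
    p i = p ⟨(i : ℕ) + 1, h⟩ → Odd (p i) → q i ≤ q ⟨(i : ℕ) + 1, h⟩)

/-- `σ` is the signed index permutation of a monomial with `y`-exponent sequence `q`:
(1) `q_{|σ(1)|} ≥ ⋯ ≥ q_{|σ(n)|}`; (2) ties `q_{|σ(i)|} = q_{|σ(j)|}` (`i < j`) force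
`σ(i) < σ(i+1) < ⋯ < σ(j)`; (3) `q_{|σ(i)|}` is even iff `σ(i) > 0`. -/
def IsSignedIndexPerm (n : ℕ) (q : Fin n → ℕ) (σ : Equiv.Perm ℤ) : Prop :=
  σ ∈ HOct n ∧
  Antitone (fun i : Fin n => q (sIdx σ i)) ∧
  (∀ i j : Fin n, i < j → q (sIdx σ i) = q (sIdx σ j) →
    ∀ k l : Fin n, i ≤ k → k < l → l ≤ j →
      σ ((k : ℕ) + 1 : ℤ) < σ ((l : ℕ) + 1 : ℤ)) ∧
  (∀ i : Fin n, Even (q (sIdx σ i)) ↔ 0 < σ ((i : ℕ) + 1 : ℤ))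

/-- `𝔰(q) = q` if `q` is even, `-q` if `q` is odd. -/
def sFun (q : ℕ) : ℤ := if Even q then (q : ℤ) else -(q : ℤ)

/-- The decreasing rearrangement `𝔬(q)` of a sequence `q`. -/
def oArr {n : ℕ} (q : Fin n → ℕ) : Fin n → ℕ := fun i => q (Tuple.sort q i.rev)

/-- Strict lexicographic comparison of sequences. -/
def LexLT {n : ℕ} {α : Type*} [LT α] (a b : Fin n → α) : Prop :=
  ∃ i, (∀ j, j < i → a j = b j) ∧ a i < b i

/-- The monomial `x^{p'} y^{q'}` strictly precedes `x^p y^q` in the total order `≼` on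
ordered monomials: either `𝔬(x^{p'}y^{q'}) <_ℓ 𝔬(x^p y^q)` lexicographically, or the
`𝔬`-data agree and `(p', 𝔰(q')) <_ℓ (p, 𝔰(q))` lexicographically. -/
def MonPrec {n : ℕ} (p' q' p q : Fin n → ℕ) : Prop :=
  LexLT (oArr p') (oArr p) ∨
  (oArr p' = oArr p ∧ LexLT (oArr q') (oArr q)) ∨
  (oArr p' = oArr p ∧ oArr q' = oArr q ∧
    (LexLT p' p ∨ (p' = p ∧ LexLT (fun i => sFun (q' i)) (fun i => sFun (q i)))))

/-- The monomial symmetric polynomial `m_{2ν}(x) = ∑_{[α] ∈ Σₙ/Σₙ(ν)} x^{2α(ν)}`,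
i.e. the sum of all distinct monomials `x^{2w}` with `w` a rearrangement of `ν`. -/
noncomputable def mSymX (n : ℕ) (ν : Fin n → ℕ) : MvPolynomial (Fin n ⊕ Fin n) ℚ :=
  ∑ w ∈ Finset.image (fun α : Equiv.Perm (Fin n) => ν ∘ α) Finset.univ,
    ∏ i : Fin n, X (Sum.inl i) ^ (2 * w i)

/-- The monomial symmetric polynomial `m_{2μ}(y)`. -/
noncomputable def mSymY (n : ℕ) (μ : Fin n → ℕ) : MvPolynomial (Fin n ⊕ Fin n) ℚ :=
  ∑ w ∈ Finset.image (fun α : Equiv.Perm (Fin n) => μ ∘ α) Finset.univ,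
    ∏ i : Fin n, X (Sum.inr i) ^ (2 * w i)

/-- The action of a signed permutation on `ℚ[x₁,…,xₙ]`:
`x_k ↦ (σ(k)/|σ(k)|)·x_{|σ(k)|}`. Here the variable `i : Fin n` is `x_{i+1}`. -/
noncomputable def actB (n : ℕ) (σ : Equiv.Perm ℤ) :
    MvPolynomial (Fin n) ℚ →ₐ[ℚ] MvPolynomial (Fin n) ℚ :=
  aeval fun i => C (sgnQ σ ((i : ℕ) + 1 : ℤ)) * X (sIdx σ i)

/-- The signed descent monomial `b_σ = ∏_{i=1}^n x_i^{f_{|σ⁻¹(i)|}(σ)}`. -/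
noncomputable def bMon (n : ℕ) (σ : Equiv.Perm ℤ) : MvPolynomial (Fin n) ℚ :=
  ∏ i : Fin n, X i ^ fB n σ ((σ⁻¹ ((i : ℕ) + 1 : ℤ)).natAbs)

/-! Since `ε_i ≡ q_{|σ(i)|} (mod 2)`, each term `q_{|σ(i)|} - f_i` is even and the last one,
`q_{|σ(n)|} - ε_n`, is non-negative; so it suffices to compare consecutive terms. Passing from
`i` to `i + 1` lowers `f` by `2 [i ∈ Des σ] + ε_i - ε_{i+1}`. Without a descent this is at most
`q_{|σ(i)|} - q_{|σ(i+1)|}` by parity. At a descent the tie condition forces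
`q_{|σ(i+1)|} < q_{|σ(i)|}`, and `σ(i) > σ(i+1)` forbids `ε_i = 1, ε_{i+1} = 0`; parity again
gives the required gap. -/

theorem HOct.apply_ne_zero {n : ℕ} {σ : Equiv.Perm ℤ} (hσ : σ ∈ HOct n) {k : ℤ} (hk : k ≠ 0) :
    σ k ≠ 0 := by
  have h0 : σ 0 = 0 := by
    have h := hσ.1 0
    rw [neg_zero] at h
    omega
  rw [← h0]
  exact σ.injective.ne hk

theorem epsB_le_epsB_of_lt {σ : Equiv.Perm ℤ} {a b : ℕ} (h : σ b < σ a) :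
    epsB σ a ≤ epsB σ b := by
  unfold epsB
  split_ifs <;> omega

theorem epsB_eq_mod_two {σ : Equiv.Perm ℤ} {k g : ℕ} (hk : σ k ≠ 0) (hg : Even g ↔ 0 < σ k) :
    epsB σ k = g % 2 := by
  rw [Nat.even_iff] at hg
  unfold epsB
  split_ifs <;> omega

theorem mem_DesB_iff {n a : ℕ} {σ : Equiv.Perm ℤ} (h₁ : 1 ≤ a) (h₂ : a < n) :
    a ∈ DesB n σ ↔ σ ((a : ℤ) + 1) < σ a := by
  simp [DesB, h₁, h₂]

theorem dB_eq_dB_succ_add (n : ℕ) (σ : Equiv.Perm ℤ) (a : ℕ) :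
    dB n σ a = dB n σ (a + 1) + if a ∈ DesB n σ then 1 else 0 := by
  have hsplit : (DesB n σ).filter (a ≤ ·) =
      ((DesB n σ).filter (a + 1 ≤ ·)).disjUnion ((DesB n σ).filter (· = a))
        (Finset.disjoint_filter.2 fun _ _ h₁ h₂ => by omega) := by
    ext j
    simp only [Finset.mem_filter, Finset.mem_disjUnion, ← and_or_left]
    exact and_congr_right fun _ => by omega
  rw [dB, dB, hsplit, Finset.card_disjUnion, Finset.filter_eq']
  split_ifs <;> simp

theorem dB_eq_zero_of_le {n a : ℕ} (σ : Equiv.Perm ℤ) (h : n ≤ a) : dB n σ a = 0 := by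
  rw [dB, Finset.card_eq_zero, Finset.filter_eq_empty_iff]
  intro j hj
  simp only [DesB, Finset.mem_filter, Finset.mem_Ico] at hj
  omega

namespace IsSignedIndexPerm

variable {n : ℕ} {σ : Equiv.Perm ℤ}

section

variable {q : Fin n → ℕ}

theorem epsB_eq (hσ : IsSignedIndexPerm n q σ) (i : Fin n) :
    epsB σ ((i : ℕ) + 1) = q (sIdx σ i) % 2 :=
  epsB_eq_mod_two (HOct.apply_ne_zero hσ.1 (by omega)) (by exact_mod_cast hσ.2.2.2 i)

theorem even_q_sub_fB (hσ : IsSignedIndexPerm n q σ) (i : Fin n) :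
    Even ((q (sIdx σ i) : ℤ) - (fB n σ ((i : ℕ) + 1) : ℤ)) := by
  have hε := hσ.epsB_eq i
  rw [Int.even_iff, fB]
  push_cast
  omega

end

variable {q : Fin (n + 1) → ℕ}

theorem fB_last_le (hσ : IsSignedIndexPerm (n + 1) q σ) :
    fB (n + 1) σ (n + 1) ≤ q (sIdx σ (Fin.last n)) := by
  have hε := hσ.epsB_eq (Fin.last n)
  rw [Fin.val_last] at hε
  rw [fB, dB_eq_zero_of_le σ le_rfl, hε]
  omega

theorem lt_of_mem_DesB (hσ : IsSignedIndexPerm (n + 1) q σ) (i : Fin n)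
    (hdes : (i : ℕ) + 1 ∈ DesB (n + 1) σ) :
    q (sIdx σ i.succ) < q (sIdx σ i.castSucc) := by
  rw [mem_DesB_iff (by omega) (by omega)] at hdes
  push_cast at hdes
  have hlt : i.castSucc < i.succ := Fin.castSucc_lt_succ
  refine (hσ.2.1 hlt.le).lt_of_ne fun heq => ?_
  have hasc := hσ.2.2.1 _ _ hlt heq.symm _ _ le_rfl hlt le_rfl
  simp only [Fin.val_castSucc, Fin.val_succ] at hasc
  push_cast at hasc
  omega

theorem q_sub_fB_succ_le (hσ : IsSignedIndexPerm (n + 1) q σ) (i : Fin n) :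
    (q (sIdx σ i.succ) : ℤ) - (fB (n + 1) σ ((i.succ : ℕ) + 1) : ℤ) ≤
      (q (sIdx σ i.castSucc) : ℤ) - (fB (n + 1) σ ((i.castSucc : ℕ) + 1) : ℤ) := by
  have hq : q (sIdx σ i.succ) ≤ q (sIdx σ i.castSucc) := hσ.2.1 Fin.castSucc_lt_succ.le
  have hε₁ := hσ.epsB_eq i.castSucc
  have hε₂ := hσ.epsB_eq i.succ
  have hd := dB_eq_dB_succ_add (n + 1) σ ((i : ℕ) + 1)
  simp only [Fin.val_castSucc, Fin.val_succ] at hε₁ hε₂ ⊢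
  simp only [fB]
  split_ifs at hd with hdes
  · have hlt := hσ.lt_of_mem_DesB i hdes
    rw [mem_DesB_iff (by omega) (by omega)] at hdes
    have hε : epsB σ ((i : ℕ) + 1) ≤ epsB σ ((i : ℕ) + 1 + 1) :=
      epsB_le_epsB_of_lt (by exact_mod_cast hdes)
    omega
  · omega

end IsSignedIndexPerm

theorem q_sub_f_decreasing_general (n : ℕ) (q : Fin n → ℕ)
    (σ : Equiv.Perm ℤ) (hσ : IsSignedIndexPerm n q σ) :
    (∀ i : Fin n, 0 ≤ (q (sIdx σ i) : ℤ) - (fB n σ ((i : ℕ) + 1) : ℤ)) ∧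
    (∀ i : Fin n, Even ((q (sIdx σ i) : ℤ) - (fB n σ ((i : ℕ) + 1) : ℤ))) ∧
    Antitone (fun i : Fin n => (q (sIdx σ i) : ℤ) - (fB n σ ((i : ℕ) + 1) : ℤ)) := by
  cases n with
  | zero => exact ⟨finZeroElim, finZeroElim, fun i => i.elim0⟩
  | succ m =>
    have hanti : Antitone fun i : Fin (m + 1) =>
        (q (sIdx σ i) : ℤ) - (fB (m + 1) σ ((i : ℕ) + 1) : ℤ) :=
      Fin.antitone_iff_succ_le.2 hσ.q_sub_fB_succ_le
    have hlast : (0 : ℤ) ≤ q (sIdx σ (Fin.last m)) - fB (m + 1) σ (m + 1) :=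
      sub_nonneg.2 (by exact_mod_cast hσ.fB_last_le)
    exact ⟨fun i => hlast.trans (hanti (Fin.le_last i)), hσ.even_q_sub_fB, hanti⟩

/-- For an ordered monomial `x^p y^q ∈ 𝒪ₙ` with signed index permutation `σ`, the
sequence `(q_{|σ(i)|} - f_i(σ))_{i=1}^n` is a weakly decreasing sequence of
non-negative even integers. -/
theorem q_sub_f_decreasing (n : ℕ) (hn : 1 ≤ n) (p q : Fin n → ℕ)
    (hO : OrderedMon n p q) (σ : Equiv.Perm ℤ) (hσ : IsSignedIndexPerm n q σ) :
    (∀ i : Fin n, 0 ≤ (q (sIdx σ i) : ℤ) - (fB n σ ((i : ℕ) + 1) : ℤ)) ∧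
    (∀ i : Fin n, Even ((q (sIdx σ i) : ℤ) - (fB n σ ((i : ℕ) + 1) : ℤ))) ∧
    Antitone (fun i : Fin n => (q (sIdx σ i) : ℤ) - (fB n σ ((i : ℕ) + 1) : ℤ)) :=
  q_sub_f_decreasing_general n q σ hσ
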